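/- arXiv:1912.06482 — 5 statements merged into one kernel-verified Lean document; each statement's English description precedes it below -/
import Mathlib

section
/- For all x ∈ ℝ, n ∈ ℕ and δ ∈ (0,1], the remainder r_{n+1}(x) := e^{ix} - ∑_{k=0}^{n} (ix)^k/k! satisfies |r_{n+1}(x)| ≤ C_{n,δ} · |x|^{n+δ}, where C_{n,δ} := 2^{1-δ} / ∏_{k=1}^{n} (k+δ) (with the empty product equal to 1). -/
/-!
Write `r_n(z) = exp z - ∑_{k<n} z^k/k!`, so that `r_{n+1}' = r_n`. For `x ≥ 0`, the base case
interpolates the two bounds `|e^{ix} - 1| ≤ x` and `|e^{ix} - 1| ≤ 2` geometrically, and each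
further step integrates the bound `C t^{n+δ}` for `|r_{n+1}(it)|` to `C x^{n+1+δ}/(n+1+δ)` for
`|r_{n+2}(ix)|`. Negative `x` reduce to positive ones since `r_n(-ix) = conj r_n(ix)`.
-/

open Complex Real Finset

open ComplexConjugate

theorem Real.le_rpow_one_sub_mul_rpow_of_le_of_le {a b c θ : ℝ} (ha : 0 ≤ a) (hab : a ≤ b)
    (hac : a ≤ c) (hθ₀ : 0 ≤ θ) (hθ₁ : θ ≤ 1) : a ≤ b ^ (1 - θ) * c ^ θ :=
  calc a = a ^ (1 - θ) * a ^ θ := by rw [← rpow_add' ha (by simp), sub_add_cancel, rpow_one]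
    _ ≤ b ^ (1 - θ) * c ^ θ :=
      mul_le_mul (rpow_le_rpow ha hab (by linarith)) (rpow_le_rpow ha hac hθ₀)
        (rpow_nonneg ha θ) (rpow_nonneg (ha.trans hab) _)

theorem norm_le_mul_rpow_of_norm_deriv_le_mul_rpow {E : Type*} [NormedAddCommGroup E]
    [NormedSpace ℝ E] {f f' : ℝ → E} {C a x : ℝ} (ha : 0 ≤ a) (hx : 0 ≤ x) (hf₀ : f 0 = 0)
    (hf : ∀ t ∈ Set.Icc 0 x, HasDerivAt f (f' t) t)
    (bound : ∀ t ∈ Set.Ico 0 x, ‖f' t‖ ≤ C * t ^ a) :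
    ‖f x‖ ≤ C / (a + 1) * x ^ (a + 1) := by
  have hB : ∀ t, HasDerivAt (fun t => C / (a + 1) * t ^ (a + 1)) (C * t ^ a) t := fun t => by
    refine ((hasDerivAt_rpow_const (Or.inr (by linarith : 1 ≤ a + 1))).const_mul _).congr_deriv ?_
    rw [add_sub_cancel_right]
    field_simp
  refine image_norm_le_of_norm_deriv_right_le_deriv_boundary
    (fun t ht => (hf t ht).continuousAt.continuousWithinAt)
    (fun t ht => (hf t (Set.Ico_subset_Icc_self ht)).hasDerivWithinAt) ?_ hB bound ⟨hx, le_rfl⟩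
  simp [hf₀, zero_rpow (by linarith : a + 1 ≠ 0)]

namespace Complex

/-- The remainder after the first `n` terms of the exponential series, so the paper's
`r_{n+1}(x)` is `expTaylorRemainder (n + 1) (I * x)`. -/
noncomputable def expTaylorRemainder (n : ℕ) (z : ℂ) : ℂ :=
  exp z - ∑ k ∈ range n, z ^ k / k.factorial

theorem expTaylorRemainder_succ_zero (n : ℕ) : expTaylorRemainder (n + 1) 0 = 0 := by
  simp [expTaylorRemainder, sum_range_succ']

theorem expTaylorRemainder_conj (n : ℕ) (z : ℂ) :
    expTaylorRemainder n (conj z) = conj (expTaylorRemainder n z) := by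
  simp [expTaylorRemainder, exp_conj, map_sum]

theorem norm_expTaylorRemainder_I_mul_abs (n : ℕ) (x : ℝ) :
    ‖expTaylorRemainder n (I * |x|)‖ = ‖expTaylorRemainder n (I * x)‖ := by
  rcases abs_cases x with ⟨hx, -⟩ | ⟨hx, -⟩
  · rw [hx]
  · have : I * ((-x : ℝ) : ℂ) = conj (I * x) := by simp
    rw [hx, this, expTaylorRemainder_conj, norm_conj]

theorem hasDerivAt_sum_range_pow_div_factorial (n : ℕ) (z : ℂ) :
    HasDerivAt (fun w : ℂ => ∑ k ∈ range (n + 1), w ^ k / k.factorial)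
      (∑ k ∈ range n, z ^ k / k.factorial) z := by
  induction n with
  | zero => simpa using hasDerivAt_const z (1 : ℂ)
  | succ n ih =>
    have hterm : HasDerivAt (fun w : ℂ => w ^ (n + 1) / (n + 1).factorial)
        (z ^ n / n.factorial) z := by
      refine ((hasDerivAt_pow (n + 1) z).div_const _).congr_deriv ?_
      rw [Nat.factorial_succ, Nat.cast_mul, Nat.add_sub_cancel]
      field_simp
    simpa only [← sum_range_succ] using ih.fun_add hterm

theorem hasDerivAt_expTaylorRemainder_succ (n : ℕ) (z : ℂ) :
    HasDerivAt (expTaylorRemainder (n + 1)) (expTaylorRemainder n z) z :=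
  (hasDerivAt_exp z).sub (hasDerivAt_sum_range_pow_div_factorial n z)

theorem hasDerivAt_expTaylorRemainder_succ_I_mul (n : ℕ) (t : ℝ) :
    HasDerivAt (fun s : ℝ => expTaylorRemainder (n + 1) (I * s))
      (I * expTaylorRemainder n (I * t)) t := by
  simpa [mul_comm] using ((hasDerivAt_expTaylorRemainder_succ n (I * t)).comp (t : ℂ)
    ((hasDerivAt_id _).const_mul I)).comp_ofReal

theorem norm_exp_I_mul_ofReal_sub_one_le_rpow {δ : ℝ} (h₀ : 0 ≤ δ) (h₁ : δ ≤ 1) (x : ℝ) :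
    ‖exp (I * x) - 1‖ ≤ 2 ^ (1 - δ) * |x| ^ δ := by
  refine le_rpow_one_sub_mul_rpow_of_le_of_le (norm_nonneg _) ?_ norm_exp_I_mul_ofReal_sub_one_le
    h₀ h₁
  calc ‖exp (I * x) - 1‖ ≤ ‖exp (I * x)‖ + ‖(1 : ℂ)‖ := norm_sub_le _ _
    _ = 2 := by rw [norm_exp_I_mul_ofReal, norm_one]; norm_num

theorem norm_expTaylorRemainder_succ_I_mul_le {δ : ℝ} (h₀ : 0 ≤ δ) (h₁ : δ ≤ 1) (n : ℕ) {x : ℝ}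
    (hx : 0 ≤ x) :
    ‖expTaylorRemainder (n + 1) (I * x)‖
      ≤ (2 ^ (1 - δ) / ∏ k ∈ range n, ((k : ℝ) + 1 + δ)) * x ^ ((n : ℝ) + δ) := by
  induction n generalizing x with
  | zero =>
    simpa [expTaylorRemainder, abs_of_nonneg hx] using norm_exp_I_mul_ofReal_sub_one_le_rpow h₀ h₁ x
  | succ n ih =>
    have h := norm_le_mul_rpow_of_norm_deriv_le_mul_rpow
      (f := fun s : ℝ => expTaylorRemainder (n + 2) (I * s)) (a := n + δ) (by positivity) hx
      (by simpa using expTaylorRemainder_succ_zero (n + 1))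
      (fun t _ => hasDerivAt_expTaylorRemainder_succ_I_mul (n + 1) t)
      (fun t ht => by simpa using ih ht.1)
    convert h using 2
    · rw [prod_range_succ, div_div]
      ring
    · rw [Nat.cast_succ, add_right_comm]

end Complex

theorem taylor_remainder_exp_I_bound (x : ℝ) (n : ℕ) (δ : ℝ) (h0 : 0 < δ) (h1 : δ ≤ 1) :
    ‖Complex.exp (Complex.I * x)
        - ∑ k ∈ Finset.range (n + 1), (Complex.I * x) ^ k / (Nat.factorial k)‖
      ≤ ((2 : ℝ) ^ (1 - δ) / ∏ k ∈ Finset.range n, ((k : ℝ) + 1 + δ)) * |x| ^ ((n : ℝ) + δ) := by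
  have h := norm_expTaylorRemainder_succ_I_mul_le h0.le h1 n (abs_nonneg x)
  rwa [norm_expTaylorRemainder_I_mul_abs] at h
end

section
/- For all x ∈ ℝ and n ∈ ℕ with n ≥ 1, |e^{ix} - ∑_{k=0}^{n-1} (ix)^k/k! - (n/(2(n+1))) · (ix)^n/n!| ≤ ((n+2)/(2(n+1))) · |x|^n/n!. -/
open Complex Real Finset

/-!
Put `C n x = (-i)ⁿ n! (e^{ix} - ∑_{k<n} (ix)ᵏ/k!) = n ∫₀ˣ (x - t)ⁿ⁻¹ e^{it} dt` (`Prawitz.rem`),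
so that `C 0 = e^{ix}`, `C (n+1) = -i (n+1) (C n - xⁿ)` and `C (n+1)' = (n+1) C n`.
With `a = n/(2(n+1))` and `b = (n+2)/(2(n+1))` we have `b² - a² = 1/(n+1)`, so the claim
`|C n x - a xⁿ| ≤ b |x|ⁿ` is equivalent to
`G n x = x²ⁿ + n xⁿ Re (C n x) - (n+1) |C n x|² ≥ 0` (`Prawitz.gap`).
Since `C n (-x) = (-1)ⁿ conj (C n x)` we may take `x ≥ 0`. We have `G 0 = 0`, the functions
`C (n+1)`, `G (n+1)`, `Ψ (n+1)` vanish at `0`, `G (n+1)' = (n+1) xⁿ Ψ (n+1)` and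
`Ψ (n+1)' = (n+1) Ψ n` for `Ψ n x = (n+2) (xⁿ - Re (C n x)) - x Im (C n x)`
(`Prawitz.gapSlope`), so monotonicity reduces everything to the trigonometric
inequality `Ψ 1 x = x (2 + cos x) - 3 sin x ≥ 0`.
-/

open Nat ComplexConjugate

theorem HasDerivAt.complex_re {f : ℝ → ℂ} {f' : ℂ} {x : ℝ} (hf : HasDerivAt f f' x) :
    HasDerivAt (fun y => (f y).re) f'.re x :=
  reCLM.hasFDerivAt.comp_hasDerivAt x hf

theorem HasDerivAt.complex_im {f : ℝ → ℂ} {f' : ℂ} {x : ℝ} (hf : HasDerivAt f f' x) :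
    HasDerivAt (fun y => (f y).im) f'.im x :=
  imCLM.hasFDerivAt.comp_hasDerivAt x hf

theorem nonneg_of_hasDerivAt_nonneg {f f' : ℝ → ℝ} {b : ℝ} (hf : ∀ y, HasDerivAt f (f' y) y)
    (h₀ : f 0 = 0) (hb : 0 ≤ b) (hf' : ∀ y ∈ Set.Ioo 0 b, 0 ≤ f' y) : 0 ≤ f b := by
  have hmono : MonotoneOn f (Set.Icc 0 b) :=
    monotoneOn_of_hasDerivWithinAt_nonneg (convex_Icc 0 b)
      (HasDerivAt.continuousOn fun y _ => hf y) (fun y _ => (hf y).hasDerivWithinAt)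
      (by simpa only [interior_Icc] using hf')
  simpa only [h₀] using hmono ⟨le_rfl, hb⟩ ⟨hb, le_rfl⟩ hb

theorem Real.mul_cos_le_sin {x : ℝ} (hx₀ : 0 ≤ x) (hxπ : x ≤ π) : x * Real.cos x ≤ Real.sin x := by
  rcases lt_or_ge x (π / 2) with hx | hx
  · have hcos : 0 < Real.cos x := cos_pos_of_mem_Ioo ⟨by linarith, hx⟩
    have := le_tan hx₀ hx
    rwa [tan_eq_sin_div_cos, le_div_iff₀ hcos] at this
  · exact (mul_nonpos_of_nonneg_of_nonpos hx₀
      (cos_nonpos_of_pi_div_two_le_of_le hx (by linarith))).trans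
      (sin_nonneg_of_nonneg_of_le_pi hx₀ hxπ)

theorem Real.mul_sin_le_two_sub_two_mul_cos {x : ℝ} (hx₀ : 0 ≤ x) (hxπ : x ≤ π) :
    x * Real.sin x ≤ 2 - 2 * Real.cos x := by
  have hderiv (y : ℝ) : HasDerivAt (fun y => 2 - 2 * Real.cos y - y * Real.sin y)
      (Real.sin y - y * Real.cos y) y := by
    refine (((hasDerivAt_cos y).const_mul 2).const_sub 2 |>.fun_sub
      ((hasDerivAt_id y).fun_mul (hasDerivAt_sin y))).congr_deriv ?_
    simp only [id]
    ring
  have := nonneg_of_hasDerivAt_nonneg hderiv (by simp) hx₀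
    fun y hy => sub_nonneg.2 (mul_cos_le_sin hy.1.le (hy.2.le.trans hxπ))
  linarith

namespace Prawitz

noncomputable def rem : ℕ → ℝ → ℂ
  | 0, x => Complex.exp (I * x)
  | n + 1, x => -I * (n + 1) * (rem n x - (x : ℂ) ^ n)

theorem I_pow_div_factorial_mul_rem (n : ℕ) (x : ℝ) :
    I ^ n / n ! * rem n x = Complex.exp (I * x) - ∑ k ∈ range n, (I * x) ^ k / k ! := by
  induction n with
  | zero => simp [rem]
  | succ n ih =>
    rw [sum_range_succ, sub_add_eq_sub_sub, ← ih, rem, factorial_succ]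
    push_cast
    field_simp
    rw [mul_pow]
    linear_combination -(I ^ n * (rem n x - x ^ n) / n !) * I_mul_I

theorem hasDerivAt_rem (n : ℕ) (x : ℝ) : HasDerivAt (rem (n + 1)) ((n + 1) * rem n x) x := by
  induction n generalizing x with
  | zero =>
    have hexp : HasDerivAt (fun y : ℝ => Complex.exp (I * y)) (Complex.exp (I * x) * I) x :=
      ((hasDerivAt_id (x : ℂ)).const_mul I).cexp.comp_ofReal.congr_deriv (by simp)
    refine ((hexp.sub_const 1).const_mul (-I * (0 + 1))).congr_of_eventuallyEq ?_ |>.congr_deriv ?_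
    · filter_upwards with y using by simp [rem]
    · simp only [rem]
      linear_combination -Complex.exp (I * x) * I_mul_I
  | succ n ih =>
    have hpow := (hasDerivAt_pow (n + 1) (x : ℂ)).comp_ofReal
    refine (((ih x).sub hpow).const_mul (-I * ((n + 1 : ℕ) + 1))).congr_deriv ?_
    simp only [rem, Nat.add_sub_cancel]
    push_cast
    ring

theorem rem_succ_zero (n : ℕ) : rem (n + 1) 0 = 0 := by
  induction n with
  | zero => simp [rem]
  | succ n ih => rw [rem, ih]; simp

theorem rem_neg (n : ℕ) (x : ℝ) : rem n (-x) = (-1) ^ n * conj (rem n x) := by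
  induction n with
  | zero => simp [rem, ← exp_conj]
  | succ n ih =>
    simp only [rem, ih, ofReal_neg, neg_pow (x : ℂ), map_mul, map_sub, map_neg, map_pow, conj_I,
      conj_ofReal, map_add, map_natCast, map_one]
    ring

theorem norm_rem_neg_sub (n : ℕ) (x c : ℝ) :
    ‖rem n (-x) - c * ((-x : ℝ) : ℂ) ^ n‖ = ‖rem n x - c * (x : ℂ) ^ n‖ := by
  have : rem n (-x) - c * ((-x : ℝ) : ℂ) ^ n = (-1) ^ n * conj (rem n x - c * (x : ℂ) ^ n) := by
    simp only [rem_neg, ofReal_neg, neg_pow (x : ℂ), map_sub, map_mul, map_pow, conj_ofReal]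
    ring
  rw [this, norm_mul, norm_pow, norm_neg, norm_one, one_pow, one_mul, norm_conj]

theorem re_rem_succ (n : ℕ) (x : ℝ) : (rem (n + 1) x).re = (n + 1) * (rem n x).im := by
  simp [rem, ← ofReal_pow]

theorem im_rem_succ (n : ℕ) (x : ℝ) : (rem (n + 1) x).im = (n + 1) * (x ^ n - (rem n x).re) := by
  simp [rem, ← ofReal_pow]
  ring

theorem hasDerivAt_re_rem (n : ℕ) (x : ℝ) :
    HasDerivAt (fun y => (rem (n + 1) y).re) ((n + 1) * (rem n x).re) x := by
  simpa using (hasDerivAt_rem n x).complex_re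

theorem hasDerivAt_im_rem (n : ℕ) (x : ℝ) :
    HasDerivAt (fun y => (rem (n + 1) y).im) ((n + 1) * (rem n x).im) x := by
  simpa using (hasDerivAt_rem n x).complex_im

noncomputable def gapSlope (n : ℕ) (x : ℝ) : ℝ :=
  (n + 2) * x ^ n - (n + 2) * (rem n x).re - x * (rem n x).im

noncomputable def gap (n : ℕ) (x : ℝ) : ℝ :=
  (x ^ n) ^ 2 + n * x ^ n * (rem n x).re - (n + 1) * ((rem n x).re ^ 2 + (rem n x).im ^ 2)

theorem gapSlope_zero (x : ℝ) : gapSlope 0 x = 2 - 2 * Real.cos x - x * Real.sin x := by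
  simp [gapSlope, rem, exp_re, exp_im]

theorem gapSlope_one (x : ℝ) : gapSlope 1 x = x * (2 + Real.cos x) - 3 * Real.sin x := by
  simp [gapSlope, rem, exp_re, exp_im]
  ring

theorem hasDerivAt_gapSlope (n : ℕ) (x : ℝ) :
    HasDerivAt (gapSlope (n + 1)) ((n + 1) * gapSlope n x) x := by
  have hpow := (hasDerivAt_pow (n + 1) x).const_mul ((n + 1 : ℕ) + 2 : ℝ)
  have hre := (hasDerivAt_re_rem n x).const_mul ((n + 1 : ℕ) + 2 : ℝ)
  have him := (hasDerivAt_id x).fun_mul (hasDerivAt_im_rem n x)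
  refine ((hpow.fun_sub hre).fun_sub him).congr_deriv ?_
  simp only [gapSlope, id, im_rem_succ, Nat.add_sub_cancel]
  push_cast
  ring

theorem gapSlope_one_nonneg {x : ℝ} (hx : 0 ≤ x) : 0 ≤ gapSlope 1 x := by
  rcases le_or_gt x π with hxπ | hxπ
  · refine nonneg_of_hasDerivAt_nonneg (hasDerivAt_gapSlope 0) (by simp [gapSlope_one]) hx ?_
    intro y hy
    rw [gapSlope_zero]
    have := mul_sin_le_two_sub_two_mul_cos hy.1.le (hy.2.le.trans hxπ)
    push_cast
    linarith
  · rw [gapSlope_one]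
    nlinarith [pi_gt_three, neg_one_le_cos x, sin_le_one x]

theorem gapSlope_nonneg (n : ℕ) {x : ℝ} (hx : 0 ≤ x) : 0 ≤ gapSlope (n + 1) x := by
  induction n generalizing x with
  | zero => exact gapSlope_one_nonneg hx
  | succ n ih =>
    refine nonneg_of_hasDerivAt_nonneg (hasDerivAt_gapSlope (n + 1)) ?_ hx
      fun y hy => mul_nonneg (by positivity) (ih hy.1.le)
    simp [gapSlope, rem_succ_zero]

theorem hasDerivAt_gap (n : ℕ) (x : ℝ) :
    HasDerivAt (gap (n + 1)) ((n + 1) * x ^ n * gapSlope (n + 1) x) x := by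
  have hpow := hasDerivAt_pow (n + 1) x
  have hre := hasDerivAt_re_rem n x
  have him := hasDerivAt_im_rem n x
  refine (((hpow.fun_pow 2).fun_add ((hpow.const_mul ((n + 1 : ℕ) : ℝ)).fun_mul hre)).fun_sub
    (((hre.fun_pow 2).fun_add (him.fun_pow 2)).const_mul ((n + 1 : ℕ) + 1 : ℝ))).congr_deriv ?_
  simp only [gapSlope, re_rem_succ, im_rem_succ, Nat.add_sub_cancel]
  push_cast
  ring

theorem gap_nonneg (n : ℕ) {x : ℝ} (hx : 0 ≤ x) : 0 ≤ gap n x := by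
  cases n with
  | zero => simp [gap, rem, exp_re, exp_im]
  | succ n =>
    refine nonneg_of_hasDerivAt_nonneg (hasDerivAt_gap n) ?_ hx
      fun y hy => mul_nonneg (mul_nonneg (by positivity) (pow_nonneg hy.1.le n))
        (gapSlope_nonneg n hy.1.le)
    simp [gap, rem_succ_zero]

theorem norm_rem_sub_le (n : ℕ) (x : ℝ) :
    ‖rem n x - (n / (2 * (n + 1)) : ℝ) * (x : ℂ) ^ n‖ ≤ (n + 2) / (2 * (n + 1)) * |x| ^ n := by
  wlog hx : 0 ≤ x generalizing x
  · simpa only [norm_rem_neg_sub, abs_neg] using this (-x) (by linarith)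
  have hn : (0 : ℝ) < n + 1 := by positivity
  have hgap : ((n + 2) / (2 * (n + 1)) * x ^ n) ^ 2 -
      (((rem n x).re - n / (2 * (n + 1)) * x ^ n) ^ 2 + (rem n x).im ^ 2) = gap n x / (n + 1) := by
    simp only [gap]
    field_simp
    ring
  rw [abs_of_nonneg hx, ← sq_le_sq₀ (norm_nonneg _) (by positivity), Complex.sq_norm, normSq_apply]
  simp only [← ofReal_pow, ← ofReal_mul, sub_re, sub_im, ofReal_re, ofReal_im, sub_zero]
  linarith [div_nonneg (gap_nonneg n hx) hn.le]

end Prawitz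

theorem prawitz_exp_I_bound_general (x : ℝ) (n : ℕ) :
    ‖Complex.exp (Complex.I * x)
        - ∑ k ∈ Finset.range n, (Complex.I * x) ^ k / (Nat.factorial k)
        - ((n : ℂ) / (2 * ((n : ℂ) + 1))) * (Complex.I * x) ^ n / (Nat.factorial n)‖
      ≤ (((n : ℝ) + 2) / (2 * ((n : ℝ) + 1))) * |x| ^ n / (Nat.factorial n) := by
  have hrem : Complex.exp (I * x) - ∑ k ∈ range n, (I * x) ^ k / (k ! : ℂ) -
      (n : ℂ) / (2 * ((n : ℂ) + 1)) * (I * x) ^ n / n ! =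
      I ^ n / n ! * (Prawitz.rem n x - (n / (2 * (n + 1)) : ℝ) * (x : ℂ) ^ n) := by
    rw [mul_sub, Prawitz.I_pow_div_factorial_mul_rem]
    push_cast
    ring
  rw [hrem, norm_mul, norm_div, norm_pow, norm_I, one_pow, Complex.norm_natCast, one_div_mul_eq_div]
  gcongr
  exact Prawitz.norm_rem_sub_le n x

theorem prawitz_exp_I_bound (x : ℝ) (n : ℕ) (hn : 1 ≤ n) :
    ‖Complex.exp (Complex.I * x)
        - ∑ k ∈ Finset.range n, (Complex.I * x) ^ k / (Nat.factorial k)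
        - ((n : ℂ) / (2 * ((n : ℂ) + 1))) * (Complex.I * x) ^ n / (Nat.factorial n)‖
      ≤ (((n : ℝ) + 2) / (2 * ((n : ℝ) + 1))) * |x| ^ n / (Nat.factorial n) :=
  prawitz_exp_I_bound_general x n
end

section
/- Let X be a real random variable with E|X|^{2+δ} < ∞ for some δ ∈ (0,1], and set a := EX, β_r := E|X|^r. Then E|X - a|^{2+δ} ≤ β_{2+δ} + 3.25 · β_2 · |a|^δ ≤ 4.25 · β_{2+δ}. -/
/-!
For `δ ≤ 1` the map `t ↦ t^δ` is subadditive, so `|X - a|^(2+δ) ≤ (|X|^δ + |a|^δ) (X - a)^2`.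
Expanding and taking expectations bounds the central moment by
`β_{2+δ} + 2|a| β_{1+δ} + a² β_δ + |a|^δ (β₂ - a²)`. With `s = √β₂` we have `|a| ≤ s` and,
by Lyapunov's inequality (Jensen for the concave `t ↦ t^(p/2)`), `β_p ≤ s^p` for `p ≤ 2`;
together with `|a| s ≤ a² + s²/4` this gives `2|a| β_{1+δ} ≤ 2|a|^δ β₂` and
`a² β_δ ≤ |a|^δ (a² + β₂/4)`, which sum to `3.25 |a|^δ β₂`. Lyapunov's inequality also gives
`|a|^δ β₂ ≤ β_{2+δ}`, whence the second bound.
-/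

open MeasureTheory ProbabilityTheory

section RealInequalities

variable {u s δ : ℝ}

lemma abs_sub_rpow_two_add_le (h0 : 0 ≤ δ) (h1 : δ ≤ 1) (x c : ℝ) :
    |x - c| ^ (2 + δ) ≤
      |x| ^ (2 + δ) + 2 * |c| * |x| ^ (1 + δ) + c ^ 2 * |x| ^ δ + |c| ^ δ * (x - c) ^ 2 := by
  have hsplit (y : ℝ) : |y| ^ (2 + δ) = |y| ^ δ * y ^ 2 := by
    rw [add_comm, Real.rpow_add' (abs_nonneg y) (by linarith), Real.rpow_two, sq_abs]
  have hsub : |x - c| ^ δ ≤ |x| ^ δ + |c| ^ δ :=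
    (Real.rpow_le_rpow (abs_nonneg _) (abs_sub x c) h0).trans
      (Real.rpow_add_le_add_rpow (abs_nonneg x) (abs_nonneg c) h0 h1)
  have hcross : -(c * x) * |x| ^ δ ≤ |c| * |x| ^ (1 + δ) := by
    rw [Real.rpow_one_add' (abs_nonneg x) (by linarith), ← mul_assoc, ← abs_mul]
    exact mul_le_mul_of_nonneg_right (neg_le_abs _) (by positivity)
  calc |x - c| ^ (2 + δ) = |x - c| ^ δ * (x - c) ^ 2 := hsplit _
    _ ≤ (|x| ^ δ + |c| ^ δ) * (x - c) ^ 2 := by gcongr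
    _ = |x| ^ δ * x ^ 2 + 2 * (-(c * x) * |x| ^ δ) + c ^ 2 * |x| ^ δ
        + |c| ^ δ * (x - c) ^ 2 := by ring
    _ ≤ _ := by rw [← hsplit x]; linarith

lemma rpow_one_sub_mul_rpow_le (hu : 0 ≤ u) (hus : u ≤ s) (h1 : δ ≤ 1) :
    u ^ (1 - δ) * s ^ δ ≤ s := by
  have hs : 0 ≤ s := hu.trans hus
  calc u ^ (1 - δ) * s ^ δ ≤ s ^ (1 - δ) * s ^ δ := by gcongr
    _ = s := by rw [← Real.rpow_add' hs (by norm_num), sub_add_cancel, Real.rpow_one]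

lemma rpow_mul_rpow_one_sub (hu : 0 ≤ u) : u ^ δ * u ^ (1 - δ) = u := by
  rw [← Real.rpow_add' hu (by norm_num), add_sub_cancel, Real.rpow_one]

lemma mul_rpow_one_add_le (hu : 0 ≤ u) (hus : u ≤ s) (h0 : 0 ≤ δ) (h1 : δ ≤ 1) :
    u * s ^ (1 + δ) ≤ u ^ δ * s ^ 2 := by
  have hs : 0 ≤ s := hu.trans hus
  calc u * s ^ (1 + δ) = u ^ δ * u ^ (1 - δ) * (s * s ^ δ) := by
        rw [rpow_mul_rpow_one_sub hu, Real.rpow_one_add' hs (by linarith)]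
    _ = u ^ δ * (u ^ (1 - δ) * s ^ δ) * s := by ring
    _ ≤ u ^ δ * s * s := by gcongr; exact rpow_one_sub_mul_rpow_le hu hus h1
    _ = u ^ δ * s ^ 2 := by ring

lemma sq_mul_rpow_le (hu : 0 ≤ u) (hus : u ≤ s) (h1 : δ ≤ 1) :
    u ^ 2 * s ^ δ ≤ u ^ δ * (u ^ 2 + s ^ 2 / 4) := by
  calc u ^ 2 * s ^ δ = u ^ δ * u ^ (1 - δ) * u * s ^ δ := by
        rw [rpow_mul_rpow_one_sub hu]; ring
    _ = u ^ δ * (u * (u ^ (1 - δ) * s ^ δ)) := by ring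
    _ ≤ u ^ δ * (u * s) := by gcongr; exact rpow_one_sub_mul_rpow_le hu hus h1
    _ ≤ u ^ δ * (u ^ 2 + s ^ 2 / 4) := by
        gcongr
        nlinarith [sq_nonneg (s - 2 * u)]

end RealInequalities

section Moments

variable {Ω : Type*} [MeasurableSpace Ω] {μ : Measure Ω} {f : Ω → ℝ}

lemma integrable_abs_rpow_of_le [IsFiniteMeasure μ] (hf : AEStronglyMeasurable f μ) {p q : ℝ}
    (hp : 0 ≤ p) (hpq : p ≤ q) (hq : Integrable (fun ω => |f ω| ^ q) μ) :
    Integrable (fun ω => |f ω| ^ p) μ := by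
  simp only [← Real.norm_eq_abs] at hq ⊢
  exact integrable_norm_rpow_of_le hf hp (hp.trans hpq) hpq hq

lemma integral_abs_rpow_le_rpow [IsProbabilityMeasure μ] (hf : AEStronglyMeasurable f μ)
    {p q : ℝ} (hp : 0 < p) (hpq : p ≤ q) (hq : Integrable (fun ω => |f ω| ^ q) μ) :
    ∫ ω, |f ω| ^ p ∂μ ≤ (∫ ω, |f ω| ^ q ∂μ) ^ (p / q) := by
  have hq0 : 0 < q := hp.trans_le hpq
  have hr : 0 ≤ p / q := div_nonneg hp.le hq0.le
  have hcomp : (fun ω => (|f ω| ^ q) ^ (p / q)) = fun ω => |f ω| ^ p := funext fun ω => by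
    rw [← Real.rpow_mul (abs_nonneg _), mul_div_cancel₀ p hq0.ne']
  have hjensen := (Real.concaveOn_rpow hr (div_le_one_of_le₀ hpq hq0.le)).le_map_integral
    (Real.continuous_rpow_const hr).continuousOn isClosed_Ici
    (ae_of_all _ fun ω => Real.rpow_nonneg (abs_nonneg (f ω)) q) hq
    (by simpa only [Function.comp_def, hcomp] using integrable_abs_rpow_of_le hf hp.le hpq hq)
  simpa only [hcomp] using hjensen

lemma abs_integral_le_rpow [IsProbabilityMeasure μ] (hf : AEStronglyMeasurable f μ) {q : ℝ}
    (hq : 1 ≤ q) (hint : Integrable (fun ω => |f ω| ^ q) μ) :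
    |∫ ω, f ω ∂μ| ≤ (∫ ω, |f ω| ^ q ∂μ) ^ (1 / q) := by
  have h := integral_abs_rpow_le_rpow hf one_pos hq hint
  simp only [Real.rpow_one] at h
  exact abs_integral_le_integral_abs.trans h

lemma integral_abs_rpow_le_sqrt_rpow [IsProbabilityMeasure μ] (hf : AEStronglyMeasurable f μ)
    {p : ℝ} (hp : 0 < p) (hp2 : p ≤ 2) (h2 : Integrable (fun ω => |f ω| ^ 2) μ) :
    ∫ ω, |f ω| ^ p ∂μ ≤ √(∫ ω, |f ω| ^ 2 ∂μ) ^ p := by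
  simp only [← Real.rpow_two] at h2 ⊢
  rw [Real.sqrt_eq_rpow, ← Real.rpow_mul (integral_nonneg fun ω => by positivity),
    one_div_mul_eq_div]
  exact integral_abs_rpow_le_rpow hf hp hp2 h2

lemma abs_integral_rpow_mul_integral_abs_rpow_le [IsProbabilityMeasure μ]
    (hf : AEStronglyMeasurable f μ) {p r : ℝ} (hp : 0 < p) (hr : 0 ≤ r) (hpr : 1 ≤ p + r)
    (hint : Integrable (fun ω => |f ω| ^ (p + r)) μ) :
    |∫ ω, f ω ∂μ| ^ r * ∫ ω, |f ω| ^ p ∂μ ≤ ∫ ω, |f ω| ^ (p + r) ∂μ := by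
  set B := ∫ ω, |f ω| ^ (p + r) ∂μ
  have hB : 0 ≤ B := integral_nonneg fun ω => by positivity
  have hmean : |∫ ω, f ω ∂μ| ^ r ≤ B ^ (r / (p + r)) := by
    calc |∫ ω, f ω ∂μ| ^ r ≤ (B ^ (1 / (p + r))) ^ r := by
          gcongr
          exact abs_integral_le_rpow hf hpr hint
      _ = B ^ (r / (p + r)) := by rw [← Real.rpow_mul hB]; ring_nf
  calc |∫ ω, f ω ∂μ| ^ r * ∫ ω, |f ω| ^ p ∂μ ≤ B ^ (r / (p + r)) * B ^ (p / (p + r)) := by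
        gcongr
        exact integral_abs_rpow_le_rpow hf hp (by linarith) hint
    _ = B := by
        rw [← Real.rpow_add' hB (by positivity), ← add_div, add_comm r, div_self (by positivity),
          Real.rpow_one]

lemma integral_abs_sub_rpow_two_add_le [IsFiniteMeasure μ] (hf : AEStronglyMeasurable f μ)
    {δ : ℝ} (h0 : 0 ≤ δ) (h1 : δ ≤ 1) (hint : Integrable (fun ω => |f ω| ^ (2 + δ)) μ) (c : ℝ) :
    ∫ ω, |f ω - c| ^ (2 + δ) ∂μ ≤ ∫ ω, |f ω| ^ (2 + δ) ∂μ + 2 * |c| * ∫ ω, |f ω| ^ (1 + δ) ∂μ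
      + c ^ 2 * ∫ ω, |f ω| ^ δ ∂μ + |c| ^ δ * ∫ ω, (f ω - c) ^ 2 ∂μ := by
  have hmom {p : ℝ} (hp : 0 ≤ p) (hpq : p ≤ 2 + δ) : Integrable (fun ω => |f ω| ^ p) μ :=
    integrable_abs_rpow_of_le hf hp hpq hint
  have hL2 : MemLp f 2 μ := by
    rw [memLp_two_iff_integrable_sq hf]
    simpa only [Real.rpow_two, sq_abs] using hmom zero_le_two (by linarith)
  have hsq : Integrable (fun ω => (f ω - c) ^ 2) μ := (hL2.sub (memLp_const c)).integrable_sq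
  have h1δ := (hmom (p := 1 + δ) (by linarith) (by linarith)).const_mul (2 * |c|)
  have hδ := (hmom h0 (by linarith)).const_mul (c ^ 2)
  have hcsq := hsq.const_mul (|c| ^ δ)
  calc ∫ ω, |f ω - c| ^ (2 + δ) ∂μ
      ≤ ∫ ω, |f ω| ^ (2 + δ) + 2 * |c| * |f ω| ^ (1 + δ) + c ^ 2 * |f ω| ^ δ
          + |c| ^ δ * (f ω - c) ^ 2 ∂μ :=
        integral_mono_of_nonneg (ae_of_all _ fun ω => by positivity)
          (((hint.add h1δ).add hδ).add hcsq)
          (ae_of_all _ fun ω => abs_sub_rpow_two_add_le h0 h1 (f ω) c)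
    _ = _ := by
        rw [integral_add (by exact (hint.add h1δ).add hδ) hcsq,
          integral_add (by exact hint.add h1δ) hδ, integral_add hint h1δ, integral_const_mul,
          integral_const_mul, integral_const_mul]

lemma integral_abs_sub_integral_rpow_two_add_le [IsProbabilityMeasure μ]
    (hf : AEStronglyMeasurable f μ) {δ : ℝ} (h0 : 0 < δ) (h1 : δ ≤ 1)
    (hint : Integrable (fun ω => |f ω| ^ (2 + δ)) μ) :
    ∫ ω, |f ω - ∫ ω', f ω' ∂μ| ^ (2 + δ) ∂μ ≤
      ∫ ω, |f ω| ^ (2 + δ) ∂μ + 3.25 * (∫ ω, |f ω| ^ 2 ∂μ) * |∫ ω', f ω' ∂μ| ^ δ := by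
  have hsq : Integrable (fun ω => |f ω| ^ 2) μ := by
    simpa only [Real.rpow_two] using integrable_abs_rpow_of_le hf zero_le_two (by linarith) hint
  have hL2 : MemLp f 2 μ := by
    rw [memLp_two_iff_integrable_sq hf]; simpa only [sq_abs] using hsq
  set a := ∫ ω, f ω ∂μ
  set β₂ := ∫ ω, |f ω| ^ 2 ∂μ
  set s := √β₂
  have hvar : ∫ ω, (f ω - a) ^ 2 ∂μ = β₂ - a ^ 2 := by
    rw [← variance_eq_integral hf.aemeasurable, variance_eq_sub hL2]
    simp only [Pi.pow_apply, sq_abs, β₂, a]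
  have ha : |a| ≤ s :=
    Real.abs_le_sqrt (by linarith [hvar ▸ integral_nonneg fun ω => sq_nonneg (f ω - a)])
  have hs : s ^ 2 = β₂ := Real.sq_sqrt (integral_nonneg fun ω => by positivity)
  have h1δ := mul_rpow_one_add_le (abs_nonneg a) ha h0.le h1
  have hδ := sq_mul_rpow_le (δ := δ) (abs_nonneg a) ha h1
  rw [hs] at h1δ hδ
  rw [sq_abs] at hδ
  set B := ∫ ω, |f ω| ^ (2 + δ) ∂μ
  calc ∫ ω, |f ω - a| ^ (2 + δ) ∂μ
      ≤ B + 2 * |a| * (∫ ω, |f ω| ^ (1 + δ) ∂μ) + a ^ 2 * (∫ ω, |f ω| ^ δ ∂μ)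
        + |a| ^ δ * (β₂ - a ^ 2) :=
        hvar ▸ integral_abs_sub_rpow_two_add_le hf h0.le h1 hint a
    _ ≤ B + 2 * |a| * s ^ (1 + δ) + a ^ 2 * s ^ δ + |a| ^ δ * (β₂ - a ^ 2) := by
        gcongr
        · exact integral_abs_rpow_le_sqrt_rpow hf (by linarith) (by linarith) hsq
        · exact integral_abs_rpow_le_sqrt_rpow hf h0 (by linarith) hsq
    _ ≤ B + 3.25 * β₂ * |a| ^ δ := by linarith

end Moments

theorem central_moment_le (Ω : Type*) [MeasureSpace Ω]
    [IsProbabilityMeasure (volume : Measure Ω)] (X : Ω → ℝ) (hX : Measurable X)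
    (δ : ℝ) (h0 : 0 < δ) (h1 : δ ≤ 1)
    (hint : Integrable (fun ω => |X ω| ^ ((2 : ℝ) + δ))) :
    (∫ ω, |X ω - ∫ ω', X ω'| ^ ((2 : ℝ) + δ)) ≤
        (∫ ω, |X ω| ^ ((2 : ℝ) + δ)) + 3.25 * (∫ ω, |X ω| ^ (2 : ℕ)) * |∫ ω', X ω'| ^ δ ∧
      (∫ ω, |X ω| ^ ((2 : ℝ) + δ)) + 3.25 * (∫ ω, |X ω| ^ (2 : ℕ)) * |∫ ω', X ω'| ^ δ ≤
        4.25 * ∫ ω, |X ω| ^ ((2 : ℝ) + δ) := by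
  have hXm : AEStronglyMeasurable X volume := hX.aestronglyMeasurable
  refine ⟨integral_abs_sub_integral_rpow_two_add_le hXm h0 h1 hint, ?_⟩
  have hmix := abs_integral_rpow_mul_integral_abs_rpow_le hXm two_pos h0.le (by linarith) hint
  simp only [Real.rpow_two] at hmix
  have hB : 0 ≤ ∫ ω, |X ω| ^ ((2 : ℝ) + δ) := integral_nonneg fun ω => by positivity
  linarith
end

section
/- For any x > 0 and s ∈ [0,1], (x/(x+s))^{1-s} ≤ Γ(x+s)/(x^s Γ(x)) ≤ 1. -/
/-! Log-convexity of `Γ` (Hölder's inequality for Euler's integral) interpolated between `x` and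
`x + 1`, together with `Γ (x + 1) = x Γ x`, gives `Γ (x + s) ≤ x ^ s Γ x`. The same bound at the
point `x + s` with exponent `1 - s` reads `x Γ x = Γ (x + 1) ≤ (x + s) ^ (1 - s) Γ (x + s)`, which is
the lower bound. -/

open Real Set

theorem Real.Gamma_mul_add_mul_le_rpow_Gamma_mul_rpow_Gamma_of_nonneg {s t a b : ℝ}
    (hs : 0 < s) (ht : 0 < t) (ha : 0 ≤ a) (hb : 0 ≤ b) (hab : a + b = 1) :
    Gamma (a * s + b * t) ≤ Gamma s ^ a * Gamma t ^ b := by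
  have hlog := convexOn_log_Gamma.2 (mem_Ioi.2 hs) (mem_Ioi.2 ht) ha hb hab
  simp only [Function.comp_apply, smul_eq_mul] at hlog
  have hΓs := Gamma_pos_of_pos hs
  have hΓt := Gamma_pos_of_pos ht
  have hmid : 0 < a * s + b * t := convex_Ioi 0 (mem_Ioi.2 hs) (mem_Ioi.2 ht) ha hb hab
  rw [← log_le_log_iff (Gamma_pos_of_pos hmid) (by positivity),
    log_mul (by positivity) (by positivity), log_rpow hΓs, log_rpow hΓt]
  exact hlog

theorem Real.Gamma_add_le_rpow_mul_Gamma {x s : ℝ} (hx : 0 < x) (hs0 : 0 ≤ s) (hs1 : s ≤ 1) :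
    Gamma (x + s) ≤ x ^ s * Gamma x := by
  have hΓx := Gamma_pos_of_pos hx
  calc Gamma (x + s) = Gamma ((1 - s) * x + s * (x + 1)) := by ring_nf
    _ ≤ Gamma x ^ (1 - s) * Gamma (x + 1) ^ s :=
      Gamma_mul_add_mul_le_rpow_Gamma_mul_rpow_Gamma_of_nonneg hx (by linarith)
        (by linarith) hs0 (by ring)
    _ = x ^ s * (Gamma x ^ (1 - s) * Gamma x ^ s) := by
      rw [Gamma_add_one hx.ne', mul_rpow hx.le hΓx.le]; ring
    _ = x ^ s * Gamma x := by rw [← rpow_add hΓx]; norm_num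

theorem Real.mul_Gamma_le_rpow_mul_Gamma_add {x s : ℝ} (hx : 0 < x) (hs0 : 0 ≤ s) (hs1 : s ≤ 1) :
    x * Gamma x ≤ (x + s) ^ (1 - s) * Gamma (x + s) := by
  have h := Gamma_add_le_rpow_mul_Gamma (x := x + s) (s := 1 - s) (by linarith) (by linarith)
    (by linarith)
  rwa [add_add_sub_cancel, Gamma_add_one hx.ne'] at h

theorem wendel_inequality (x s : ℝ) (hx : 0 < x) (hs0 : 0 ≤ s) (hs1 : s ≤ 1) :
    (x / (x + s)) ^ (1 - s) ≤ Real.Gamma (x + s) / (x ^ s * Real.Gamma x) ∧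
      Real.Gamma (x + s) / (x ^ s * Real.Gamma x) ≤ 1 := by
  have hxs : 0 < x + s := by linarith
  have hden : 0 < x ^ s * Gamma x := mul_pos (rpow_pos_of_pos hx s) (Gamma_pos_of_pos hx)
  refine ⟨?_, (div_le_one hden).2 (Gamma_add_le_rpow_mul_Gamma hx hs0 hs1)⟩
  rw [div_rpow hx.le hxs.le, div_le_div_iff₀ (rpow_pos_of_pos hxs _) hden]
  calc x ^ (1 - s) * (x ^ s * Gamma x) = x * Gamma x := by
        rw [← mul_assoc, ← rpow_add hx]; norm_num
    _ ≤ (x + s) ^ (1 - s) * Gamma (x + s) := mul_Gamma_le_rpow_mul_Gamma_add hx hs0 hs1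
    _ = Gamma (x + s) * (x + s) ^ (1 - s) := mul_comm _ _
end

section
/- Let ξ_1, …, ξ_n be independent Bernoulli random variables with P(ξ_i = 1) = p_i = 1 - P(ξ_i = 0), set λ = ∑ p_i and let N_λ be Poisson distributed with parameter λ. Then sup_{B ⊆ ℕ} |P(∑_{i=1}^n ξ_i ∈ B) - P(N_λ ∈ B)| ≤ ∑_{i=1}^n p_i². -/
/-!
Identify the law of an `ℕ`-valued random variable with its mass function. The law of a sum of
independent variables is the Cauchy convolution of the laws, and `Poisson(a)` convolved with
`Poisson(b)` is `Poisson(a + b)`, so both sides are `n`-fold convolutions. Convolving with a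
probability mass function does not increase the `ℓ¹` distance, hence the distance of the two
convolutions is at most the sum of the distances of the factors, and
`‖Bernoulli(p) - Poisson(p)‖₁ = 2p(1 - e^{-p}) ≤ 2p²`. Finally, two probability mass functions
differ on any set by at most half their `ℓ¹` distance.
-/

open MeasureTheory ProbabilityTheory Finset
open scoped Nat

noncomputable section

def natConv (f g : ℕ → ℝ) (n : ℕ) : ℝ := ∑ x ∈ antidiagonal n, f x.1 * g x.2

def l1Dist (f g : ℕ → ℝ) : ℝ := ∑' k, |f k - g k|

structure IsPMF (f : ℕ → ℝ) : Prop where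
  nonneg : ∀ k, 0 ≤ f k
  hasSum : HasSum f 1

def bernoulliMass (p : ℝ) (k : ℕ) : ℝ := if k = 0 then 1 - p else if k = 1 then p else 0

def poissonMass (r : ℝ) (k : ℕ) : ℝ := Real.exp (-r) * r ^ k / k !

lemma natConv_comm (f g : ℕ → ℝ) : natConv f g = natConv g f := by
  ext n
  rw [natConv, natConv, ← Nat.sum_antidiagonal_swap]
  simp only [Prod.fst_swap, Prod.snd_swap, mul_comm]

lemma natConv_sub_natConv (h f g : ℕ → ℝ) :
    natConv h f - natConv h g = natConv h (f - g) := by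
  ext n
  simp only [natConv, Pi.sub_apply, mul_sub, sum_sub_distrib]

lemma summable_abs_natConv {f g : ℕ → ℝ} (hf : Summable fun k => |f k|)
    (hg : Summable fun k => |g k|) : Summable fun n => |natConv f g n| := by
  simpa only [natConv, Real.norm_eq_abs] using summable_norm_sum_mul_antidiagonal_of_summable_norm
    (f := f) (g := g) (by simpa only [Real.norm_eq_abs] using hf)
    (by simpa only [Real.norm_eq_abs] using hg)

lemma tsum_abs_natConv_le {f g : ℕ → ℝ} (hf : Summable fun k => |f k|)
    (hg : Summable fun k => |g k|) :
    ∑' n, |natConv f g n| ≤ (∑' k, |f k|) * ∑' k, |g k| := by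
  have hf' : Summable fun k => ‖|f k|‖ := by simpa only [Real.norm_eq_abs, abs_abs] using hf
  have hg' : Summable fun k => ‖|g k|‖ := by simpa only [Real.norm_eq_abs, abs_abs] using hg
  rw [tsum_mul_tsum_eq_tsum_sum_antidiagonal_of_summable_norm hf' hg']
  refine (summable_abs_natConv hf hg).tsum_le_tsum (fun n => ?_)
    (summable_norm_sum_mul_antidiagonal_of_summable_norm hf' hg').of_norm
  refine (abs_sum_le_sum_abs _ _).trans_eq ?_
  simp only [abs_mul]

namespace IsPMF

variable {f g : ℕ → ℝ}

lemma summable_abs (hf : IsPMF f) : Summable fun k => |f k| :=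
  hf.hasSum.summable.abs

lemma tsum_abs (hf : IsPMF f) : ∑' k, |f k| = 1 := by
  simp only [abs_of_nonneg (hf.nonneg _), hf.hasSum.tsum_eq]

lemma hasSum_sub (hf : IsPMF f) (hg : IsPMF g) : HasSum (fun k => f k - g k) 0 := by
  simpa using hf.hasSum.sub hg.hasSum

lemma summable_abs_sub (hf : IsPMF f) (hg : IsPMF g) : Summable fun k => |f k - g k| :=
  (hf.hasSum_sub hg).summable.abs

lemma natConv (hf : IsPMF f) (hg : IsPMF g) : IsPMF (natConv f g) := by
  refine ⟨fun n => sum_nonneg fun x _ => mul_nonneg (hf.nonneg _) (hg.nonneg _), ?_⟩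
  have hsum : Summable (_root_.natConv f g) :=
    (summable_abs_natConv hf.summable_abs hg.summable_abs).of_abs
  rw [hsum.hasSum_iff]
  unfold _root_.natConv
  rw [← tsum_mul_tsum_eq_tsum_sum_antidiagonal_of_summable_norm
      (by simpa only [Real.norm_eq_abs] using hf.summable_abs)
      (by simpa only [Real.norm_eq_abs] using hg.summable_abs),
    hf.hasSum.tsum_eq, hg.hasSum.tsum_eq, one_mul]

lemma eq_bernoulliMass {p : ℝ} (hf : IsPMF f) (h0 : f 0 = 1 - p) (h1 : f 1 = p) :
    f = bernoulliMass p := by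
  ext k
  rcases k with _ | _ | k
  · simpa [bernoulliMass] using h0
  · simpa [bernoulliMass] using h1
  · have hle := sum_le_hasSum {0, 1, k + 2} (fun i _ => hf.nonneg i) hf.hasSum
    rw [sum_insert (by simp), sum_insert (by simp), sum_singleton, h0, h1] at hle
    have hzero : bernoulliMass p (k + 2) = 0 := by simp [bernoulliMass]
    linarith [hf.nonneg (k + 2)]

end IsPMF

lemma tsum_abs_eq_two_mul_tsum_posPart {ι : Type*} {d : ι → ℝ} (hd : HasSum d 0) :
    ∑' i, |d i| = 2 * ∑' i, (d i)⁺ := by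
  have habs : ∀ i, |d i| = 2 * (d i)⁺ - d i := fun i => by
    linarith [posPart_add_negPart (d i), posPart_sub_negPart (d i)]
  have hpos : Summable fun i => (d i)⁺ := hd.summable.abs.of_nonneg_of_le
    (fun i => posPart_nonneg _) fun i => by linarith [habs i, le_posPart (d i)]
  rw [tsum_congr habs, (hpos.mul_left 2).tsum_sub hd.summable, hd.tsum_eq, tsum_mul_left,
    sub_zero]

lemma abs_tsum_subtype_le_half_tsum_abs {ι : Type*} {d : ι → ℝ} (hd : HasSum d 0) (B : Set ι) :
    |∑' i : B, d i| ≤ (∑' i, |d i|) / 2 := by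
  have hsplit : ∑' i : B, d i + ∑' i : ↑Bᶜ, d i = 0 := by
    rw [(hd.summable.subtype _).tsum_add_tsum_compl (hd.summable.subtype _), hd.tsum_eq]
  have habs := hd.summable.abs
  have hsplit_abs : ∑' i : B, |d i| + ∑' i : ↑Bᶜ, |d i| = ∑' i, |d i| :=
    (habs.subtype _).tsum_add_tsum_compl (habs.subtype _)
  have hB : |∑' i : B, d i| ≤ ∑' i : B, |d i| := by
    have := norm_tsum_le_tsum_norm (f := fun i : B => d i) (habs.subtype B)
    simpa only [Real.norm_eq_abs] using this
  have hBc : |∑' i : ↑Bᶜ, d i| ≤ ∑' i : ↑Bᶜ, |d i| := by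
    have := norm_tsum_le_tsum_norm (f := fun i : ↑Bᶜ => d i) (habs.subtype Bᶜ)
    simpa only [Real.norm_eq_abs] using this
  rw [eq_neg_of_add_eq_zero_right hsplit, abs_neg] at hBc
  linarith

lemma l1Dist_triangle {f g h : ℕ → ℝ} (hfg : Summable fun k => |f k - g k|)
    (hgh : Summable fun k => |g k - h k|) : l1Dist f h ≤ l1Dist f g + l1Dist g h := by
  have hle : ∀ k, |f k - h k| ≤ |f k - g k| + |g k - h k| := fun k => abs_sub_le _ _ _
  rw [l1Dist, l1Dist, l1Dist, ← hfg.tsum_add hgh]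
  exact (hfg.add hgh).of_nonneg_of_le (fun k => abs_nonneg _) hle |>.tsum_le_tsum hle
    (hfg.add hgh)

lemma l1Dist_natConv_left_le {h f g : ℕ → ℝ} (hh : Summable fun k => |h k|)
    (hfg : Summable fun k => |f k - g k|) :
    l1Dist (natConv h f) (natConv h g) ≤ (∑' k, |h k|) * l1Dist f g := by
  calc l1Dist (natConv h f) (natConv h g) = ∑' n, |natConv h (f - g) n| := by
        simp only [l1Dist, ← natConv_sub_natConv, Pi.sub_apply]
    _ ≤ (∑' k, |h k|) * l1Dist f g := tsum_abs_natConv_le hh hfg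

lemma l1Dist_natConv_le_add {a b c d : ℕ → ℝ} (ha : IsPMF a) (hb : IsPMF b) (hc : IsPMF c)
    (hd : IsPMF d) : l1Dist (natConv a b) (natConv c d) ≤ l1Dist a c + l1Dist b d := by
  have hac := l1Dist_natConv_left_le hb.summable_abs (ha.summable_abs_sub hc)
  have hbd := l1Dist_natConv_left_le hc.summable_abs (hb.summable_abs_sub hd)
  rw [natConv_comm b, natConv_comm b, hb.tsum_abs, one_mul] at hac
  rw [hc.tsum_abs, one_mul] at hbd
  calc l1Dist (natConv a b) (natConv c d)
      ≤ l1Dist (natConv a b) (natConv c b) + l1Dist (natConv c b) (natConv c d) :=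
        l1Dist_triangle ((ha.natConv hb).summable_abs_sub (hc.natConv hb))
          ((hc.natConv hb).summable_abs_sub (hc.natConv hd))
    _ ≤ l1Dist a c + l1Dist b d := add_le_add hac hbd

lemma abs_tsum_subtype_sub_le_half_l1Dist {f g : ℕ → ℝ} (hf : IsPMF f) (hg : IsPMF g)
    (B : Set ℕ) : |∑' k : B, f k - ∑' k : B, g k| ≤ l1Dist f g / 2 := by
  have hsub := ((hf.hasSum.summable.subtype B).hasSum.sub
    (hg.hasSum.summable.subtype B).hasSum).tsum_eq
  rw [show ∑' k : B, f k - ∑' k : B, g k = ∑' k : B, (f k - g k) from hsub.symm]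
  exact abs_tsum_subtype_le_half_tsum_abs (hf.hasSum_sub hg) B

lemma isPMF_bernoulliMass {p : ℝ} (hp : p ∈ Set.Icc 0 1) : IsPMF (bernoulliMass p) := by
  refine ⟨fun k => ?_, ?_⟩
  · unfold bernoulliMass
    split_ifs <;> linarith [hp.1, hp.2]
  · have hsupp : ∀ k ∉ ({0, 1} : Finset ℕ), bernoulliMass p k = 0 := fun k hk => by
      simp only [mem_insert, mem_singleton, not_or] at hk
      simp [bernoulliMass, hk.1, hk.2]
    simpa [bernoulliMass] using hasSum_sum_of_ne_finset_zero hsupp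

lemma isPMF_poissonMass {r : ℝ} (hr : 0 ≤ r) : IsPMF (poissonMass r) :=
  ⟨fun k => by unfold poissonMass; positivity, hasSum_one_poissonMeasure ⟨r, hr⟩⟩

lemma natConv_poissonMass (a b : ℝ) :
    natConv (poissonMass a) (poissonMass b) = poissonMass (a + b) := by
  ext n
  have hterm : ∀ x ∈ antidiagonal n, poissonMass a x.1 * poissonMass b x.2
      = Real.exp (-(a + b)) / n ! * (n.choose x.1 • (a ^ x.1 * b ^ x.2)) := by
    rintro ⟨i, j⟩ hij
    rw [HasAntidiagonal.mem_antidiagonal] at hij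
    subst hij
    simp only [poissonMass, nsmul_eq_mul, neg_add, Real.exp_add]
    have hchoose : ((i + j).choose j : ℝ) ≠ 0 :=
      Nat.cast_ne_zero.mpr (Nat.choose_pos (Nat.le_add_left j i)).ne'
    rw [Nat.choose_symm_add, ← Nat.add_choose_mul_factorial_mul_factorial i j]
    push_cast
    field_simp
  rw [natConv, sum_congr rfl hterm, ← mul_sum, ← (Commute.all a b).add_pow', poissonMass]
  ring

lemma l1Dist_bernoulliMass_poissonMass_le {p : ℝ} (hp : p ∈ Set.Icc 0 1) :
    l1Dist (bernoulliMass p) (poissonMass p) ≤ 2 * p ^ 2 := by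
  -- the difference `bernoulliMass p - poissonMass p` is positive only at `1`
  have hexp : 1 - p ≤ Real.exp (-p) := by linarith [Real.add_one_le_exp (-p)]
  have hd := (isPMF_bernoulliMass hp).hasSum_sub (isPMF_poissonMass hp.1)
  have hpos : ∀ k ≠ 1, (bernoulliMass p k - poissonMass p k)⁺ = 0 := by
    intro k hk
    rw [posPart_eq_zero]
    rcases k with _ | _ | k
    · simpa [bernoulliMass, poissonMass] using hexp
    · exact absurd rfl hk
    · simpa [bernoulliMass] using (isPMF_poissonMass hp.1).nonneg (k + 2)
  have hone : bernoulliMass p 1 - poissonMass p 1 = p * (1 - Real.exp (-p)) := by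
    simp only [bernoulliMass, one_ne_zero, ↓reduceIte, poissonMass, pow_one, Nat.factorial_one,
      Nat.cast_one, div_one]
    ring
  have hexp_le_one : Real.exp (-p) ≤ 1 := Real.exp_le_one_iff.mpr (neg_nonpos.mpr hp.1)
  rw [l1Dist, tsum_abs_eq_two_mul_tsum_posPart hd, tsum_eq_single 1 hpos, hone,
    posPart_eq_self.mpr (mul_nonneg hp.1 (by linarith))]
  nlinarith [hp.1]

section Law

variable {Ω : Type*} [MeasurableSpace Ω] {μ : Measure Ω}

def massFun (μ : Measure Ω) (X : Ω → ℕ) (k : ℕ) : ℝ := μ.real {ω | X ω = k}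

lemma hasSum_massFun_subtype [IsFiniteMeasure μ] {X : Ω → ℕ} (hX : Measurable X) (B : Set ℕ) :
    HasSum (fun k : B => massFun μ X k) (μ.real {ω | X ω ∈ B}) := by
  have hunion : ∑' k : B, μ (X ⁻¹' {(k : ℕ)}) = μ (X ⁻¹' B) :=
    tsum_measure_preimage_singleton B.to_countable fun k _ => hX (measurableSet_singleton k)
  have hfin : ∑' k : B, μ (X ⁻¹' {(k : ℕ)}) ≠ ⊤ := hunion ▸ measure_ne_top μ _
  have := ENNReal.hasSum_toReal hfin
  rwa [← ENNReal.tsum_toReal_eq fun _ => measure_ne_top μ _, hunion] at this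

lemma isPMF_massFun [IsProbabilityMeasure μ] {X : Ω → ℕ} (hX : Measurable X) :
    IsPMF (massFun μ X) := by
  refine ⟨fun k => measureReal_nonneg, ?_⟩
  have := (hasSum_subtype_iff_indicator (f := massFun μ X) (s := Set.univ)).mp
    (hasSum_massFun_subtype hX Set.univ)
  simpa only [Set.indicator_univ, Set.mem_univ, Set.ofPred_true, probReal_univ] using this

lemma abs_measureReal_sub_le_half_l1Dist [IsProbabilityMeasure μ] {X Y : Ω → ℕ}
    (hX : Measurable X) (hY : Measurable Y) (B : Set ℕ) :
    |μ.real {ω | X ω ∈ B} - μ.real {ω | Y ω ∈ B}| ≤ l1Dist (massFun μ X) (massFun μ Y) / 2 := by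
  rw [← (hasSum_massFun_subtype hX B).tsum_eq, ← (hasSum_massFun_subtype hY B).tsum_eq]
  exact abs_tsum_subtype_sub_le_half_l1Dist (isPMF_massFun hX) (isPMF_massFun hY) B

lemma massFun_add [IsFiniteMeasure μ] {X Y : Ω → ℕ} (hX : Measurable X) (hY : Measurable Y)
    (hXY : IndepFun X Y μ) :
    massFun μ (fun ω => X ω + Y ω) = natConv (massFun μ X) (massFun μ Y) := by
  ext n
  have hunion : {ω | X ω + Y ω = n} = ⋃ x ∈ antidiagonal n, X ⁻¹' {x.1} ∩ Y ⁻¹' {x.2} := by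
    ext ω
    simp
  have hdisj : (antidiagonal n : Set (ℕ × ℕ)).PairwiseDisjoint
      fun x => X ⁻¹' {x.1} ∩ Y ⁻¹' {x.2} := by
    rintro ⟨i, j⟩ hij ⟨i', j'⟩ hij' hne
    refine Set.disjoint_left.mpr fun ω h h' => hne ?_
    simp_all
  rw [massFun, hunion, measureReal_biUnion_finset hdisj
    fun x _ => (hX (measurableSet_singleton _)).inter (hY (measurableSet_singleton _))]
  refine sum_congr rfl fun x _ => ?_
  rw [measureReal_def, hXY.measure_inter_preimage_eq_mul _ _ (measurableSet_singleton _)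
    (measurableSet_singleton _), ENNReal.toReal_mul]
  rfl

lemma massFun_zero [IsProbabilityMeasure μ] : massFun μ (fun _ => 0) = poissonMass 0 := by
  ext k
  rcases k with _ | k <;> simp [massFun, poissonMass]

lemma l1Dist_massFun_sum_poissonMass_le [IsProbabilityMeasure μ] {ι : Type*}
    {ξ : ι → Ω → ℕ} {p : ι → ℝ} (hmeas : ∀ i, Measurable (ξ i)) (hind : iIndepFun ξ μ)
    (hp : ∀ i, p i ∈ Set.Icc 0 1) (hlaw : ∀ i, massFun μ (ξ i) = bernoulliMass (p i))
    (s : Finset ι) :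
    l1Dist (massFun μ fun ω => ∑ i ∈ s, ξ i ω) (poissonMass (∑ i ∈ s, p i))
      ≤ 2 * ∑ i ∈ s, p i ^ 2 := by
  classical
  induction s using Finset.induction_on with
  | empty => simp [massFun_zero, l1Dist]
  | @insert j s hj ih =>
    have hsum_meas : Measurable fun ω => ∑ i ∈ s, ξ i ω := by fun_prop
    have hindep : IndepFun (ξ j) (fun ω => ∑ i ∈ s, ξ i ω) μ := by
      simpa only [Finset.sum_fn] using (hind.indepFun_finsetSum_of_notMem hmeas hj).symm
    have hs_nonneg : 0 ≤ ∑ i ∈ s, p i := sum_nonneg fun i _ => (hp i).1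
    simp only [sum_insert hj]
    rw [massFun_add (hmeas j) hsum_meas hindep, hlaw j, ← natConv_poissonMass]
    calc _ ≤ l1Dist (bernoulliMass (p j)) (poissonMass (p j))
          + l1Dist (massFun μ fun ω => ∑ i ∈ s, ξ i ω) (poissonMass (∑ i ∈ s, p i)) :=
          l1Dist_natConv_le_add (isPMF_bernoulliMass (hp j)) (isPMF_massFun hsum_meas)
            (isPMF_poissonMass (hp j).1) (isPMF_poissonMass hs_nonneg)
      _ ≤ 2 * p j ^ 2 + 2 * ∑ i ∈ s, p i ^ 2 :=
          add_le_add (l1Dist_bernoulliMass_poissonMass_le (hp j)) ih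
      _ = 2 * (p j ^ 2 + ∑ i ∈ s, p i ^ 2) := by ring

end Law

end

theorem poisson_approximation (Ω : Type*) [MeasureSpace Ω]
    [IsProbabilityMeasure (volume : Measure Ω)]
    (n : ℕ) (p : Fin n → ℝ) (hp : ∀ i, p i ∈ Set.Ioc (0 : ℝ) 1)
    (ξ : Fin n → Ω → ℕ) (hmeas : ∀ i, Measurable (ξ i))
    (hind : iIndepFun ξ volume)
    (hber1 : ∀ i, (volume {ω | ξ i ω = 1}).toReal = p i)
    (hber0 : ∀ i, (volume {ω | ξ i ω = 0}).toReal = 1 - p i)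
    (N : Ω → ℕ) (hNmeas : Measurable N)
    (hN : ∀ k : ℕ, (volume {ω | N ω = k}).toReal =
      Real.exp (-(∑ i, p i)) * (∑ i, p i) ^ k / (Nat.factorial k)) :
    (⨆ B : Set ℕ,
        |(volume {ω | (∑ i, ξ i ω) ∈ B}).toReal - (volume {ω | N ω ∈ B}).toReal|)
      ≤ ∑ i, (p i) ^ 2 := by
  have hp' : ∀ i, p i ∈ Set.Icc 0 1 := fun i => Set.Ioc_subset_Icc_self (hp i)
  have hlaw : ∀ i, massFun volume (ξ i) = bernoulliMass (p i) := fun i =>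
    (isPMF_massFun (hmeas i)).eq_bernoulliMass (hber0 i) (hber1 i)
  have hlawN : massFun volume N = poissonMass (∑ i, p i) := funext hN
  have hdist := l1Dist_massFun_sum_poissonMass_le hmeas hind hp' hlaw univ
  rw [← hlawN] at hdist
  refine Real.iSup_le (fun B => ?_) (sum_nonneg fun i _ => sq_nonneg _)
  have := abs_measureReal_sub_le_half_l1Dist (μ := volume) (X := fun ω => ∑ i, ξ i ω)
    (by fun_prop) hNmeas B
  simp only [measureReal_def] at this
  linarith
end
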